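/- For every r > 0 there exists a constant C_r > 0 such that ‖ū‖_{L^∞(𝓑_r)} ≤ C_r ( ‖u‖_{L^∞(B_r)} + ∫_{ℝⁿ∖B_r} |u(y)| |y|^{−(n+2s)} dy ), where 𝓑_r := B_{9r/10} × (−r,r) ⊂ ℝ^{n+1}. -/

import Mathlib

open MeasureTheory Filter Metric Set
open scoped ENNReal Topology

noncomputable section

/-! ### Euclidean spaces -/

abbrev Rn (n : ℕ) := EuclideanSpace ℝ (Fin n)
abbrev Rn1 (n : ℕ) := EuclideanSpace ℝ (Fin (n+1))

/-- The horizontal part `x ∈ ℝⁿ` of a point `X = (x,z) ∈ ℝ^{n+1}`. -/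
def xpart {n : ℕ} (X : Rn1 n) : Rn n := WithLp.toLp 2 (fun i : Fin n => X i.castSucc)

/-- The vertical coordinate `z ∈ ℝ` of a point `X = (x,z) ∈ ℝ^{n+1}`. -/
def zc {n : ℕ} (X : Rn1 n) : ℝ := X (Fin.last n)

/-- The point `(x,z) ∈ ℝ^{n+1}` built from `x ∈ ℝⁿ` and `z ∈ ℝ`. -/
def emb {n : ℕ} (x : Rn n) (z : ℝ) : Rn1 n :=
  WithLp.toLp 2 (Fin.snoc (α := fun _ => ℝ) (WithLp.ofLp x) z)

/-- The cylinder `𝓑_r := B_{9r/10} × (−r,r) ⊂ ℝ^{n+1}`. -/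
def BB (n : ℕ) (r : ℝ) : Set (Rn1 n) :=
  {X | xpart X ∈ ball (0 : Rn n) (9*r/10) ∧ zc X ∈ Ioo (-r) r}

/-! ### Nonlocal energies on ℝⁿ -/

/-- The interaction `L(A,B) = ∬_{A×B} |x−y|^{−(n+σ)} dx dy`. -/
def interL (n : ℕ) (σ : ℝ) (A B : Set (Rn n)) : ℝ≥0∞ :=
  ∫⁻ x in A, ∫⁻ y in B, ENNReal.ofReal (‖x - y‖ ^ (-((n : ℝ) + σ)))

/-- The fractional perimeter `Per_σ(E,Ω)`. -/
def fracPer (n : ℕ) (σ : ℝ) (E Ω : Set (Rn n)) : ℝ≥0∞ :=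
  interL n σ (E ∩ Ω) (Ω \ E) + interL n σ (E ∩ Ω) (Eᶜ \ Ω) + interL n σ (E \ Ω) (Ω \ E)

/-- The cross-shaped set `Q_Ω := (Ω×Ω) ∪ (Ωᶜ×Ω) ∪ (Ω×Ωᶜ)`. -/
def QSet {n : ℕ} (Ω : Set (Rn n)) : Set (Rn n × Rn n) :=
  (Ω ×ˢ Ω) ∪ (Ωᶜ ×ˢ Ω) ∪ (Ω ×ˢ Ωᶜ)

/-- The fractional Dirichlet energy `∬_{Q_Ω} |u(x)−u(y)|²/|x−y|^{n+2s} dx dy`. -/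
def dirEnergy (n : ℕ) (s : ℝ) (u : Rn n → ℝ) (Ω : Set (Rn n)) : ℝ≥0∞ :=
  ∫⁻ p in QSet Ω, ENNReal.ofReal ((u p.1 - u p.2)^2 / ‖p.1 - p.2‖ ^ ((n : ℝ) + 2*s))

/-- The total functional `F_Ω(u,E)`. -/
def funcF (n : ℕ) (s σ : ℝ) (u : Rn n → ℝ) (E Ω : Set (Rn n)) : ℝ≥0∞ :=
  dirEnergy n s u Ω + fracPer n σ E Ω

/-- A pair `(u,E)` is admissible if `u ≥ 0` a.e. in `E` and `u ≤ 0` a.e. in `Eᶜ`. -/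
def Admissible (n : ℕ) (u : Rn n → ℝ) (E : Set (Rn n)) : Prop :=
  (∀ᵐ x : Rn n, x ∈ E → 0 ≤ u x) ∧ (∀ᵐ x : Rn n, x ∉ E → u x ≤ 0)

/-- Membership in `H^s(ℝⁿ)`: square integrable with finite Gagliardo seminorm. -/
def MemHsRn (n : ℕ) (s : ℝ) (w : Rn n → ℝ) : Prop :=
  MemLp w 2 (volume : Measure (Rn n)) ∧
  (∫⁻ p : Rn n × Rn n, ENNReal.ofReal ((w p.1 - w p.2)^2 / ‖p.1 - p.2‖ ^ ((n : ℝ) + 2*s))) < ⊤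

/-- `(u,E)` is a minimizing pair in `Ω`. -/
def MinimizingIn (n : ℕ) (s σ : ℝ) (u : Rn n → ℝ) (E Ω : Set (Rn n)) : Prop :=
  Admissible n u E ∧ funcF n s σ u E Ω < ⊤ ∧
  ∀ (v : Rn n → ℝ) (F : Set (Rn n)), Measurable v → MeasurableSet F →
    Admissible n v F → MemHsRn n s (u - v) →
    (∀ᵐ x : Rn n, x ∉ Ω → u x = v x) → E \ Ω = F \ Ω →
    funcF n s σ u E Ω ≤ funcF n s σ v F Ω

/-- `0 ∈ ∂E` in the measure-theoretic sense. -/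
def ZeroOnBoundary (n : ℕ) (E : Set (Rn n)) : Prop :=
  ∀ ρ : ℝ, 0 < ρ → 0 < volume (ball (0 : Rn n) ρ ∩ E) ∧ 0 < volume (ball (0 : Rn n) ρ \ E)

/-- The growth bound `∫_{ℝⁿ} |u(x)|/(1+|x|^{n+2s}) dx ≤ Λ`. -/
def GrowthBound (n : ℕ) (s : ℝ) (u : Rn n → ℝ) (Λ : ℝ) : Prop :=
  (∫⁻ x : Rn n, ENNReal.ofReal (|u x| / (1 + ‖x‖ ^ ((n : ℝ) + 2*s)))) ≤ ENNReal.ofReal Λ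

/-! ### The extension -/

/-- The extension `ū(x,z) := ∫_{ℝⁿ} |z|^{2s} u(y) (|x−y|²+z²)^{−(n+2s)/2} dy`. -/
def uext (n : ℕ) (s : ℝ) (u : Rn n → ℝ) (X : Rn1 n) : ℝ :=
  ∫ y : Rn n, |zc X| ^ (2*s) * u y / ((‖xpart X - y‖^2 + (zc X)^2) ^ (((n : ℝ) + 2*s)/2))

/-! ### Weighted Sobolev spaces on the cylinder -/

/-- The norm `‖v‖_{ℍ^s(𝓑_r)}`. -/
def hsNorm (n : ℕ) (s r : ℝ) (v : Rn1 n → ℝ) : ℝ :=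
  Real.sqrt (∫ X in BB n r, |zc X| ^ (1-2*s) * ‖gradient v X‖^2) +
  Real.sqrt (∫ X in BB n r, |zc X| ^ (1-2*s) * (v X)^2)

/-- Smooth functions compactly supported inside `𝓑_r`. -/
def IsSmoothCc (n : ℕ) (r : ℝ) (v : Rn1 n → ℝ) : Prop :=
  ContDiff ℝ (⊤ : ℕ∞) v ∧ HasCompactSupport v ∧ tsupport v ⊆ BB n r

/-- `v ∈ ℍ^s(𝓑_r)`: limit of smooth functions in the `ℍ^s(𝓑_r)` norm. -/
def MemHs (n : ℕ) (s r : ℝ) (v : Rn1 n → ℝ) : Prop :=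
  ∃ vk : ℕ → Rn1 n → ℝ, (∀ k, ContDiffOn ℝ (⊤ : ℕ∞) (vk k) (BB n r)) ∧
    Tendsto (fun k => hsNorm n s r (v - vk k)) atTop (𝓝 0)

/-- `v ∈ ℍ^s_0(𝓑_r)`: limit of compactly supported smooth functions. -/
def MemHs0 (n : ℕ) (s r : ℝ) (v : Rn1 n → ℝ) : Prop :=
  ∃ vk : ℕ → Rn1 n → ℝ, (∀ k, IsSmoothCc n r (vk k)) ∧
    Tendsto (fun k => hsNorm n s r (v - vk k)) atTop (𝓝 0)

/-- `g` is the trace on `{z=0}` of `w ∈ ℍ^s_0(𝓑_r)`. -/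
def HasTrace0 (n : ℕ) (s r : ℝ) (w : Rn1 n → ℝ) (g : Rn n → ℝ) : Prop :=
  ∃ wk : ℕ → Rn1 n → ℝ, (∀ k, IsSmoothCc n r (wk k)) ∧
    Tendsto (fun k => hsNorm n s r (w - wk k)) atTop (𝓝 0) ∧
    Tendsto (fun k => ∫ x in ball (0 : Rn n) (9*r/10), (g x - wk k (emb x 0))^2) atTop (𝓝 0)

/-- `g` is the trace on `B_{9/10}` of `φ ∈ ℍ^s(𝓑_2)`, defined via a cutoff. -/
def HasTracePhi (n : ℕ) (s : ℝ) (φ : Rn1 n → ℝ) (g : Rn n → ℝ) : Prop :=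
  ∃ τ : Rn1 n → ℝ, ContDiff ℝ (⊤ : ℕ∞) τ ∧ HasCompactSupport τ ∧ tsupport τ ⊆ BB n (3/2) ∧
    (∀ X ∈ BB n (5/4), τ X = 1) ∧ HasTrace0 n s 2 (fun X => τ X * φ X) g

/-- The class `𝒟^φ := {v ∈ ℍ^s(𝓑_1) : v − φ ∈ ℍ^s_0(𝓑_1)}`. -/
def MemD (n : ℕ) (s : ℝ) (φ v : Rn1 n → ℝ) : Prop :=
  MemHs n s 1 v ∧ MemHs0 n s 1 (v - φ)

/-- `g` is the trace `T_v = T_{v−φ} + T_φ` of `v ∈ 𝒟^φ` (as a function on `B_{9/10}`). -/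
def HasTraceD (n : ℕ) (s : ℝ) (φ v : Rn1 n → ℝ) (g : Rn n → ℝ) : Prop :=
  ∃ g1 g2 : Rn n → ℝ, HasTrace0 n s 1 (v - φ) g1 ∧ HasTracePhi n s φ g2 ∧
    (∀ᵐ x ∂(volume.restrict (ball (0 : Rn n) (9/10))), g x = g1 x + g2 x)

/-- The constrained class `𝒟^φ_{K,γ} := {v ∈ 𝒟^φ : T_v = γ a.e. in K}`. -/
def MemDK (n : ℕ) (s : ℝ) (φ : Rn1 n → ℝ) (K : Set (Rn n)) (γ : Rn n → ℝ)
    (v : Rn1 n → ℝ) : Prop :=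
  MemD n s φ v ∧ ∃ g : Rn n → ℝ, HasTraceD n s φ v g ∧
    (∀ᵐ x ∂(volume.restrict K), g x = γ x)

/-- The relaxed class `𝒟̃^φ_K := {v ∈ 𝒟^φ : T_v ≤ 0 a.e. in K}`. -/
def MemDT (n : ℕ) (s : ℝ) (φ : Rn1 n → ℝ) (K : Set (Rn n)) (v : Rn1 n → ℝ) : Prop :=
  MemD n s φ v ∧ ∃ g : Rn n → ℝ, HasTraceD n s φ v g ∧
    (∀ᵐ x ∂(volume.restrict K), g x ≤ 0)

/-- The energy `ℰ(v) := ∫_{𝓑_1} |z|^a |∇v|² dX`, with `a = 1−2s`. -/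
def En (n : ℕ) (s : ℝ) (v : Rn1 n → ℝ) : ℝ :=
  ∫ X in BB n 1, |zc X| ^ (1-2*s) * ‖gradient v X‖^2

/-- `Φ` is the fractional harmonic replacement, i.e. the minimizer of `ℰ` over `𝒟^φ_{K,γ}`. -/
def IsReplacement (n : ℕ) (s : ℝ) (φ : Rn1 n → ℝ) (K : Set (Rn n)) (γ : Rn n → ℝ)
    (Φ : Rn1 n → ℝ) : Prop :=
  MemDK n s φ K γ Φ ∧ ∀ v : Rn1 n → ℝ, MemDK n s φ K γ v → En n s Φ ≤ En n s v

/-- A bounded Lipschitz domain: an open bounded set whose boundary is locally the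
graph of a Lipschitz function. -/
def IsBddLipschitzDomain {E : Type*} [NormedAddCommGroup E] [InnerProductSpace ℝ E]
    (U : Set E) : Prop :=
  IsOpen U ∧ Bornology.IsBounded U ∧
  ∀ p ∈ frontier U, ∃ r : ℝ, 0 < r ∧ ∃ ν : E, ‖ν‖ = 1 ∧
    ∃ ψ : E → ℝ, (∃ L : NNReal, LipschitzWith L ψ) ∧
      ∀ q ∈ ball p r, (q ∈ U ↔ (inner ℝ q ν : ℝ) < ψ (q - (inner ℝ q ν : ℝ) • ν))


lemma poisson_kernel_identity (n : ℕ) (s : ℝ) {z : ℝ} (hz : z ≠ 0) (w : Rn n) :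
    |z| ^ (2*s) / ((‖w‖^2 + z^2) ^ (((n:ℝ) + 2*s)/2)) =
      |z| ^ (-(n:ℝ)) * (((1:ℝ) + ‖z⁻¹ • w‖^2) ^ (-((n:ℝ) + 2*s)/2)) := by
  have hzp : (0:ℝ) < |z| := abs_pos.2 hz
  have hz2 : (0:ℝ) < z^2 := by rw [← sq_abs]; exact pow_pos hzp 2
  have hA : (0:ℝ) < ‖w‖^2 + z^2 := by nlinarith [sq_nonneg ‖w‖]
  have h2 : (1:ℝ) + ‖z⁻¹ • w‖^2 = (‖w‖^2 + z^2) / z^2 := by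
    rw [norm_smul, Real.norm_eq_abs, abs_inv, mul_pow, inv_pow, sq_abs]
    field_simp
    ring
  have h4 : (z^2 : ℝ) ^ (((n:ℝ) + 2*s)/2) = |z| ^ ((n:ℝ) + 2*s) := by
    rw [← sq_abs z, ← Real.rpow_natCast |z| 2, ← Real.rpow_mul (abs_nonneg z)]
    congr 1
    push_cast
    ring
  have hAq : (0:ℝ) < (‖w‖^2 + z^2) ^ (((n:ℝ) + 2*s)/2) := Real.rpow_pos_of_pos hA _
  have hzq : (0:ℝ) < |z| ^ ((n:ℝ) + 2*s) := Real.rpow_pos_of_pos hzp _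
  have hzn : (0:ℝ) < |z| ^ ((n:ℝ)) := Real.rpow_pos_of_pos hzp _
  rw [h2, neg_div, Real.rpow_neg (by positivity : (0:ℝ) ≤ (‖w‖^2 + z^2)/z^2),
    Real.div_rpow hA.le hz2.le, h4, Real.rpow_neg (abs_nonneg z) (n:ℝ)]
  rw [div_eq_iff hAq.ne']
  field_simp
  rw [← Real.rpow_add hzp]
  congr 1
  ring

lemma poisson_mass (n : ℕ) {s : ℝ} (hs0 : 0 < s) (x : Rn n) {z : ℝ} (hz : z ≠ 0) :
    Integrable (fun y : Rn n => |z| ^ (2*s) / ((‖x - y‖^2 + z^2) ^ (((n:ℝ) + 2*s)/2))) ∧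
    ∫ y : Rn n, |z| ^ (2*s) / ((‖x - y‖^2 + z^2) ^ (((n:ℝ) + 2*s)/2)) =
      ∫ w : Rn n, ((1:ℝ) + ‖w‖^2) ^ (-((n:ℝ) + 2*s)/2) := by
  have key : ∀ y : Rn n, |z| ^ (2*s) / ((‖x - y‖^2 + z^2) ^ (((n:ℝ) + 2*s)/2)) =
      |z| ^ (-(n:ℝ)) * (((1:ℝ) + ‖z⁻¹ • (x - y)‖^2) ^ (-((n:ℝ) + 2*s)/2)) :=
    fun y => poisson_kernel_identity n s hz (x - y)
  have hkkI : Integrable (fun w : Rn n => ((1:ℝ) + ‖w‖^2) ^ (-((n:ℝ) + 2*s)/2)) := by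
    have h := integrable_rpow_neg_one_add_norm_sq (E := Rn n) (μ := volume)
      (r := (n:ℝ) + 2*s) (by rw [finrank_euclideanSpace_fin]; linarith)
    exact h
  have h1 : Integrable (fun w : Rn n => ((1:ℝ) + ‖z⁻¹ • w‖^2) ^ (-((n:ℝ) + 2*s)/2)) :=
    (integrable_comp_smul_iff volume
      (fun w : Rn n => ((1:ℝ) + ‖w‖^2) ^ (-((n:ℝ) + 2*s)/2)) (inv_ne_zero hz)).2 hkkI
  have h2 : Integrable (fun y : Rn n => ((1:ℝ) + ‖z⁻¹ • (x - y)‖^2) ^ (-((n:ℝ) + 2*s)/2)) :=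
    h1.comp_sub_left x
  have h3 : Integrable (fun y : Rn n =>
      |z| ^ (-(n:ℝ)) * (((1:ℝ) + ‖z⁻¹ • (x - y)‖^2) ^ (-((n:ℝ) + 2*s)/2))) :=
    h2.const_mul _
  refine ⟨h3.congr (ae_of_all _ fun y => (key y).symm), ?_⟩
  have e0 : ∫ y : Rn n, |z| ^ (2*s) / ((‖x - y‖^2 + z^2) ^ (((n:ℝ) + 2*s)/2)) =
      ∫ y : Rn n, |z| ^ (-(n:ℝ)) * (((1:ℝ) + ‖z⁻¹ • (x - y)‖^2) ^ (-((n:ℝ) + 2*s)/2)) :=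
    integral_congr_ae (ae_of_all _ key)
  have e1 : ∫ y : Rn n, |z| ^ (-(n:ℝ)) * (((1:ℝ) + ‖z⁻¹ • (x - y)‖^2) ^ (-((n:ℝ) + 2*s)/2)) =
      |z| ^ (-(n:ℝ)) * ∫ y : Rn n, ((1:ℝ) + ‖z⁻¹ • (x - y)‖^2) ^ (-((n:ℝ) + 2*s)/2) :=
    integral_const_mul _ _
  have e2 : ∫ y : Rn n, ((1:ℝ) + ‖z⁻¹ • (x - y)‖^2) ^ (-((n:ℝ) + 2*s)/2) =
      ∫ y : Rn n, ((1:ℝ) + ‖z⁻¹ • y‖^2) ^ (-((n:ℝ) + 2*s)/2) :=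
    integral_sub_left_eq_self (fun y : Rn n => ((1:ℝ) + ‖z⁻¹ • y‖^2) ^ (-((n:ℝ) + 2*s)/2))
      volume x
  have e3 : ∫ y : Rn n, ((1:ℝ) + ‖z⁻¹ • y‖^2) ^ (-((n:ℝ) + 2*s)/2) =
      |((z⁻¹ : ℝ) ^ (n : ℕ))⁻¹| * ∫ w : Rn n, ((1:ℝ) + ‖w‖^2) ^ (-((n:ℝ) + 2*s)/2) := by
    have h := MeasureTheory.Measure.integral_comp_smul (volume : Measure (Rn n))
      (fun w : Rn n => ((1:ℝ) + ‖w‖^2) ^ (-((n:ℝ) + 2*s)/2)) z⁻¹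
    rw [finrank_euclideanSpace_fin, smul_eq_mul] at h
    exact h
  have e4 : |z| ^ (-(n:ℝ)) * |((z⁻¹ : ℝ) ^ (n : ℕ))⁻¹| = 1 := by
    rw [inv_pow, inv_inv, abs_pow, ← Real.rpow_natCast |z| n,
      ← Real.rpow_add (abs_pos.2 hz), neg_add_cancel, Real.rpow_zero]
  rw [e0, e1, e2, e3, ← mul_assoc, e4, one_mul]

/-! ### STATEMENT 3 -/
set_option maxHeartbeats 2000000 in
theorem stmt3 (n : ℕ) (hn : 1 ≤ n) (s : ℝ) (hs : s ∈ Ioo (0:ℝ) 1) (r : ℝ) (hr : 0 < r) :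
    ∃ C : ℝ, 0 < C ∧
      ∀ u : Rn n → ℝ, Measurable u →
        (∫⁻ y : Rn n, ENNReal.ofReal (|u y| / (1 + ‖y‖ ^ ((n : ℝ) + 2*s)))) < ⊤ →
        ∀ M : ℝ, (∀ᵐ x ∂(volume.restrict (ball (0 : Rn n) r)), |u x| ≤ M) →
        ∀ X ∈ BB n r,
          |uext n s u X| ≤
            C * (M + ∫ y in (ball (0 : Rn n) r)ᶜ, |u y| / ‖y‖ ^ ((n : ℝ) + 2*s)) := by
  obtain ⟨hs0, hs1⟩ := hs
  have hq0 : (0:ℝ) < (n:ℝ) + 2*s := by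
    have hn0 : (0:ℝ) ≤ (n:ℝ) := Nat.cast_nonneg n
    linarith
  set K : ℝ := ∫ w : Rn n, ((1:ℝ) + ‖w‖^2) ^ (-((n:ℝ) + 2*s)/2) with hK
  have hK0 : 0 ≤ K := integral_nonneg fun w => Real.rpow_nonneg (by positivity) _
  set D : ℝ := (10:ℝ) ^ ((n:ℝ) + 2*s) * r ^ (2*s) with hD
  have hD0 : 0 < D := mul_pos (Real.rpow_pos_of_pos (by norm_num) _)
    (Real.rpow_pos_of_pos hr _)
  have hC0 : 0 < max K D + 1 := by
    have h := le_trans hK0 (le_max_left K D)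
    linarith
  refine ⟨max K D + 1, hC0, ?_⟩
  intro u hu hgrow M hM X hX
  set x : Rn n := xpart X with hxdef
  set z : ℝ := zc X with hzdef
  have hX' : x ∈ ball (0 : Rn n) (9*r/10) ∧ z ∈ Ioo (-r) r := hX
  have hxn : ‖x‖ < 9*r/10 := by
    have h := hX'.1
    rwa [mem_ball, dist_zero_right] at h
  have hzr : |z| < r := abs_lt.2 ⟨hX'.2.1, hX'.2.2⟩
  have hM0 : 0 ≤ M := by
    by_contra hcon
    push_neg at hcon
    have hFalse : ∀ᵐ y ∂(volume.restrict (ball (0:Rn n) r)), False :=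
      hM.mono fun y hy => absurd hy (not_le.2 (lt_of_lt_of_le hcon (abs_nonneg _)))
    have h0 : volume.restrict (ball (0:Rn n) r) univ = 0 := by
      simpa [ae_iff] using hFalse
    rw [Measure.restrict_apply_univ] at h0
    exact absurd h0 (measure_ball_pos volume 0 hr).ne'
  have humeas : Measurable fun y : Rn n => |u y| / ‖y‖ ^ ((n:ℝ) + 2*s) := by
    apply Measurable.div hu.abs
    exact (continuous_norm.rpow_const fun y => Or.inr hq0.le).measurable
  set L : ℝ≥0∞ := ∫⁻ y in (ball (0:Rn n) r)ᶜ, ENNReal.ofReal (|u y| / ‖y‖ ^ ((n:ℝ) + 2*s))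
    with hL
  have hc1 : (0:ℝ) < 1 + r ^ (-((n:ℝ) + 2*s)) := by positivity
  have hLtop : L < ⊤ := by
    have hb : ∀ y ∈ (ball (0:Rn n) r)ᶜ, ENNReal.ofReal (|u y| / ‖y‖ ^ ((n:ℝ) + 2*s)) ≤
        ENNReal.ofReal ((1 + r ^ (-((n:ℝ) + 2*s))) * (|u y| / (1 + ‖y‖ ^ ((n:ℝ) + 2*s)))) := by
      intro y hy
      have hyr : r ≤ ‖y‖ := by
        simpa [mem_ball, dist_zero_right, not_lt] using hy
      apply ENNReal.ofReal_le_ofReal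
      have h1 : (0:ℝ) < ‖y‖ ^ ((n:ℝ) + 2*s) :=
        Real.rpow_pos_of_pos (lt_of_lt_of_le hr hyr) _
      have hrp : (0:ℝ) < r ^ ((n:ℝ) + 2*s) := Real.rpow_pos_of_pos hr _
      have h2 : r ^ ((n:ℝ) + 2*s) ≤ ‖y‖ ^ ((n:ℝ) + 2*s) :=
        Real.rpow_le_rpow hr.le hyr hq0.le
      have h3 : (1:ℝ) ≤ r ^ (-((n:ℝ) + 2*s)) * ‖y‖ ^ ((n:ℝ) + 2*s) := by
        rw [Real.rpow_neg hr.le, ← inv_mul_cancel₀ hrp.ne']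
        exact mul_le_mul_of_nonneg_left h2 (inv_nonneg.2 hrp.le)
      have h5 : (0:ℝ) < 1 + ‖y‖ ^ ((n:ℝ) + 2*s) := by positivity
      rw [← mul_div_assoc, div_le_div_iff₀ h1 h5]
      nlinarith [mul_le_mul_of_nonneg_left h3 (abs_nonneg (u y)), abs_nonneg (u y), h1]
    calc L ≤ ∫⁻ y in (ball (0:Rn n) r)ᶜ,
          ENNReal.ofReal ((1 + r ^ (-((n:ℝ) + 2*s))) * (|u y| / (1 + ‖y‖ ^ ((n:ℝ) + 2*s)))) :=
        lintegral_mono_ae (ae_restrict_of_forall_mem measurableSet_ball.compl hb)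
      _ = ENNReal.ofReal (1 + r ^ (-((n:ℝ) + 2*s))) *
          ∫⁻ y in (ball (0:Rn n) r)ᶜ, ENNReal.ofReal (|u y| / (1 + ‖y‖ ^ ((n:ℝ) + 2*s))) := by
        simp_rw [ENNReal.ofReal_mul hc1.le]
        exact lintegral_const_mul' _ _ ENNReal.ofReal_ne_top
      _ ≤ ENNReal.ofReal (1 + r ^ (-((n:ℝ) + 2*s))) *
          ∫⁻ y : Rn n, ENNReal.ofReal (|u y| / (1 + ‖y‖ ^ ((n:ℝ) + 2*s))) :=
        mul_le_mul_right (setLIntegral_le_lintegral _ _) _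
      _ < ⊤ := ENNReal.mul_lt_top ENNReal.ofReal_lt_top hgrow
  set J : ℝ := ∫ y in (ball (0:Rn n) r)ᶜ, |u y| / ‖y‖ ^ ((n:ℝ) + 2*s) with hJdef
  have hJL : J = L.toReal :=
    integral_eq_lintegral_of_nonneg_ae (ae_of_all _ fun y => by positivity)
      humeas.aestronglyMeasurable
  have hJ0 : 0 ≤ J := by rw [hJL]; exact ENNReal.toReal_nonneg
  rcases eq_or_ne z 0 with hz0 | hz0
  · have hzero : ∀ y : Rn n,
        |z| ^ (2*s) * u y / ((‖x - y‖^2 + z^2) ^ (((n:ℝ) + 2*s)/2)) = 0 := by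
      intro y
      rw [hz0]
      simp [Real.zero_rpow (ne_of_gt (by linarith : (0:ℝ) < 2*s))]
    have h0 : uext n s u X = 0 := by
      have hrfl : uext n s u X =
          ∫ y : Rn n, |z| ^ (2*s) * u y / ((‖x - y‖^2 + z^2) ^ (((n:ℝ) + 2*s)/2)) := rfl
      rw [hrfl]
      simp only [hzero]
      exact integral_zero _ _
    rw [h0, abs_zero]
    exact mul_nonneg hC0.le (add_nonneg hM0 hJ0)
  · obtain ⟨hkernI, hkernV⟩ := poisson_mass n hs0 x hz0
    have hz2 : (0:ℝ) < z^2 := by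
      rw [← sq_abs]
      exact pow_pos (abs_pos.2 hz0) 2
    have hApos : ∀ y : Rn n, (0:ℝ) < ‖x - y‖^2 + z^2 := fun y => by
      nlinarith [sq_nonneg ‖x - y‖]
    have habs : ∀ y : Rn n, |(|z| ^ (2*s) * u y / ((‖x - y‖^2 + z^2) ^ (((n:ℝ) + 2*s)/2)))| =
        (|z| ^ (2*s) / ((‖x - y‖^2 + z^2) ^ (((n:ℝ) + 2*s)/2))) * |u y| := by
      intro y
      rw [abs_div, abs_mul, abs_of_nonneg (Real.rpow_nonneg (abs_nonneg z) _),
        abs_of_nonneg (Real.rpow_nonneg (hApos y).le _)]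
      ring
    have hfmeas : Measurable fun y : Rn n =>
        |z| ^ (2*s) * u y / ((‖x - y‖^2 + z^2) ^ (((n:ℝ) + 2*s)/2)) := by
      apply Measurable.div (hu.const_mul _)
      exact ((((continuous_const.sub continuous_id).norm.pow 2).add
        continuous_const).rpow_const fun y => Or.inr (by positivity)).measurable
    have step1 : |uext n s u X| ≤
        ∫ y : Rn n, |(|z| ^ (2*s) * u y / ((‖x - y‖^2 + z^2) ^ (((n:ℝ) + 2*s)/2)))| := by
      have hrfl : uext n s u X =
          ∫ y : Rn n, |z| ^ (2*s) * u y / ((‖x - y‖^2 + z^2) ^ (((n:ℝ) + 2*s)/2)) := rfl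
      rw [hrfl]
      simpa [Real.norm_eq_abs] using norm_integral_le_integral_norm (μ := volume)
        fun y : Rn n => |z| ^ (2*s) * u y / ((‖x - y‖^2 + z^2) ^ (((n:ℝ) + 2*s)/2))
    set T : ℝ≥0∞ := ∫⁻ y : Rn n,
      ENNReal.ofReal (|(|z| ^ (2*s) * u y / ((‖x - y‖^2 + z^2) ^ (((n:ℝ) + 2*s)/2)))|) with hT
    have step2 : ∫ y : Rn n,
        |(|z| ^ (2*s) * u y / ((‖x - y‖^2 + z^2) ^ (((n:ℝ) + 2*s)/2)))| = T.toReal :=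
      integral_eq_lintegral_of_nonneg_ae (ae_of_all _ fun y => abs_nonneg _)
        hfmeas.abs.aestronglyMeasurable
    have hsplit : T = (∫⁻ y in ball (0:Rn n) r,
          ENNReal.ofReal (|(|z| ^ (2*s) * u y / ((‖x - y‖^2 + z^2) ^ (((n:ℝ) + 2*s)/2)))|)) +
        ∫⁻ y in (ball (0:Rn n) r)ᶜ,
          ENNReal.ofReal (|(|z| ^ (2*s) * u y / ((‖x - y‖^2 + z^2) ^ (((n:ℝ) + 2*s)/2)))|) :=
      (lintegral_add_compl _ measurableSet_ball).symm
    have hball : (∫⁻ y in ball (0:Rn n) r,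
        ENNReal.ofReal (|(|z| ^ (2*s) * u y / ((‖x - y‖^2 + z^2) ^ (((n:ℝ) + 2*s)/2)))|)) ≤
        ENNReal.ofReal M * ENNReal.ofReal K := by
      have hb1 : (∫⁻ y in ball (0:Rn n) r,
          ENNReal.ofReal (|(|z| ^ (2*s) * u y / ((‖x - y‖^2 + z^2) ^ (((n:ℝ) + 2*s)/2)))|)) ≤
          ∫⁻ y in ball (0:Rn n) r, ENNReal.ofReal M *
            ENNReal.ofReal (|z| ^ (2*s) / ((‖x - y‖^2 + z^2) ^ (((n:ℝ) + 2*s)/2))) := by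
        refine lintegral_mono_ae (hM.mono fun y hy => ?_)
        rw [← ENNReal.ofReal_mul hM0]
        apply ENNReal.ofReal_le_ofReal
        rw [habs y]
        calc (|z| ^ (2*s) / ((‖x - y‖^2 + z^2) ^ (((n:ℝ) + 2*s)/2))) * |u y| ≤
            (|z| ^ (2*s) / ((‖x - y‖^2 + z^2) ^ (((n:ℝ) + 2*s)/2))) * M :=
            mul_le_mul_of_nonneg_left hy (by positivity)
          _ = M * (|z| ^ (2*s) / ((‖x - y‖^2 + z^2) ^ (((n:ℝ) + 2*s)/2))) := mul_comm _ _
      calc _ ≤ _ := hb1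
        _ = ENNReal.ofReal M * ∫⁻ y in ball (0:Rn n) r,
            ENNReal.ofReal (|z| ^ (2*s) / ((‖x - y‖^2 + z^2) ^ (((n:ℝ) + 2*s)/2))) :=
          lintegral_const_mul' _ _ ENNReal.ofReal_ne_top
        _ ≤ ENNReal.ofReal M * ∫⁻ y : Rn n,
            ENNReal.ofReal (|z| ^ (2*s) / ((‖x - y‖^2 + z^2) ^ (((n:ℝ) + 2*s)/2))) :=
          mul_le_mul_right (setLIntegral_le_lintegral _ _) _
        _ = ENNReal.ofReal M * ENNReal.ofReal K := by
          rw [← MeasureTheory.ofReal_integral_eq_lintegral_ofReal hkernI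
            (ae_of_all _ fun y => by positivity), hkernV]
    have hcompl : (∫⁻ y in (ball (0:Rn n) r)ᶜ,
        ENNReal.ofReal (|(|z| ^ (2*s) * u y / ((‖x - y‖^2 + z^2) ^ (((n:ℝ) + 2*s)/2)))|)) ≤
        ENNReal.ofReal D * L := by
      have hb2 : ∀ y ∈ (ball (0:Rn n) r)ᶜ,
          ENNReal.ofReal (|(|z| ^ (2*s) * u y / ((‖x - y‖^2 + z^2) ^ (((n:ℝ) + 2*s)/2)))|) ≤
          ENNReal.ofReal D * ENNReal.ofReal (|u y| / ‖y‖ ^ ((n:ℝ) + 2*s)) := by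
        intro y hy
        have hyr : r ≤ ‖y‖ := by
          simpa [mem_ball, dist_zero_right, not_lt] using hy
        have hy0 : (0:ℝ) < ‖y‖ := lt_of_lt_of_le hr hyr
        have hY : (0:ℝ) < ‖y‖ ^ ((n:ℝ) + 2*s) := Real.rpow_pos_of_pos hy0 _
        have h10 : (0:ℝ) < (10:ℝ) ^ ((n:ℝ) + 2*s) := Real.rpow_pos_of_pos (by norm_num) _
        rw [← ENNReal.ofReal_mul hD0.le]
        apply ENNReal.ofReal_le_ofReal
        rw [habs y, div_mul_eq_mul_div]
        have hxy : ‖y‖/10 ≤ ‖x - y‖ := by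
          have h1 := norm_sub_norm_le y x
          rw [norm_sub_rev y x] at h1
          linarith
        have hden : ‖y‖ ^ ((n:ℝ) + 2*s) / 10 ^ ((n:ℝ) + 2*s) ≤
            (‖x - y‖^2 + z^2) ^ (((n:ℝ) + 2*s)/2) := by
          have e1 : ‖y‖ ^ ((n:ℝ) + 2*s) / 10 ^ ((n:ℝ) + 2*s) =
              ((‖y‖/10)^2 : ℝ) ^ (((n:ℝ) + 2*s)/2) := by
            rw [← Real.rpow_natCast (‖y‖/10) 2, ← Real.rpow_mul (by positivity)]
            rw [show ((2:ℕ):ℝ) * (((n:ℝ) + 2*s)/2) = (n:ℝ) + 2*s by push_cast; ring]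
            rw [Real.div_rpow (norm_nonneg y) (by norm_num)]
          rw [e1]
          apply Real.rpow_le_rpow (by positivity) ?_ (by positivity)
          nlinarith [sq_nonneg z, hxy, hy0.le]
        have hnum : |z| ^ (2*s) * |u y| ≤ r ^ (2*s) * |u y| :=
          mul_le_mul_of_nonneg_right
            (Real.rpow_le_rpow (abs_nonneg z) hzr.le (by linarith)) (abs_nonneg _)
        have hdpos : (0:ℝ) < ‖y‖ ^ ((n:ℝ) + 2*s) / 10 ^ ((n:ℝ) + 2*s) := div_pos hY h10
        calc |z| ^ (2*s) * |u y| / ((‖x - y‖^2 + z^2) ^ (((n:ℝ) + 2*s)/2)) ≤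
            (r ^ (2*s) * |u y|) / (‖y‖ ^ ((n:ℝ) + 2*s) / 10 ^ ((n:ℝ) + 2*s)) :=
            div_le_div₀ (mul_nonneg (Real.rpow_nonneg hr.le _) (abs_nonneg _)) hnum hdpos hden
          _ = D * (|u y| / ‖y‖ ^ ((n:ℝ) + 2*s)) := by
            rw [hD]
            field_simp
      calc (∫⁻ y in (ball (0:Rn n) r)ᶜ,
            ENNReal.ofReal (|(|z| ^ (2*s) * u y / ((‖x - y‖^2 + z^2) ^ (((n:ℝ) + 2*s)/2)))|)) ≤
          ∫⁻ y in (ball (0:Rn n) r)ᶜ,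
            ENNReal.ofReal D * ENNReal.ofReal (|u y| / ‖y‖ ^ ((n:ℝ) + 2*s)) :=
          lintegral_mono_ae (ae_restrict_of_forall_mem measurableSet_ball.compl hb2)
        _ = ENNReal.ofReal D * L := lintegral_const_mul' _ _ ENNReal.ofReal_ne_top
    have hRne : ENNReal.ofReal M * ENNReal.ofReal K ≠ ⊤ :=
      ENNReal.mul_ne_top ENNReal.ofReal_ne_top ENNReal.ofReal_ne_top
    have hDLne : ENNReal.ofReal D * L ≠ ⊤ := ENNReal.mul_ne_top ENNReal.ofReal_ne_top hLtop.ne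
    have hTle : T ≤ ENNReal.ofReal M * ENNReal.ofReal K + ENNReal.ofReal D * L := by
      rw [hsplit]
      exact add_le_add hball hcompl
    have htoReal : T.toReal ≤ M * K + D * J := by
      have h1 := ENNReal.toReal_mono (ENNReal.add_ne_top.2 ⟨hRne, hDLne⟩) hTle
      rw [ENNReal.toReal_add hRne hDLne, ← ENNReal.ofReal_mul hM0,
        ENNReal.toReal_ofReal (mul_nonneg hM0 hK0), ENNReal.toReal_mul,
        ENNReal.toReal_ofReal hD0.le, ← hJL] at h1
      exact h1
    have hfinal : |uext n s u X| ≤ M * K + D * J := le_trans (step1.trans_eq step2) htoReal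
    have hKC : K ≤ max K D + 1 := le_trans (le_max_left _ _) (by linarith)
    have hDC : D ≤ max K D + 1 := le_trans (le_max_right _ _) (by linarith)
    calc |uext n s u X| ≤ M * K + D * J := hfinal
      _ ≤ (max K D + 1) * (M + J) := by
        nlinarith [mul_le_mul_of_nonneg_left hKC hM0, mul_le_mul_of_nonneg_left hDC hJ0]
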